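/- arXiv:1811.06327 — 5 statements merged into one kernel-verified Lean document; each statement's English description precedes it below -/
import Mathlib

section
/- Let p ≥ q > 0 and p' ≥ q' ≥ 0 be integers with p' + q' = p + q and q' ≤ q. Then p'q' + p' - 1 + ⌊(p'-q')/4⌋ + (if p'=q' then 1 else 0) < 2(pq + p - 1) + (if p=q then 1 else 0). (Length of SO(p',q') is less than the length lower bound of SU(p,q).) -/
theorem so_length_lt_su_bound (p q p' q' : ℕ) (hq : 0 < q) (hpq : q ≤ p)
    (hpq' : q' ≤ p') (hsum : p' + q' = p + q) (hqq : q' ≤ q) :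
    p' * q' + p' - 1 + (p' - q') / 4 + (if p' = q' then 1 else 0)
      < 2 * (p * q + p - 1) + (if p = q then 1 else 0) := by
  by_cases h : p' = q'
  · have h1 : p = q := by omega
    have h2 : p' = q := by omega
    have h3 : q' = q := by omega
    rw [h2, h3, h1]
    simp only [if_pos rfl]
    have hm : 1 ≤ q * q := Nat.one_le_iff_ne_zero.mpr (Nat.mul_ne_zero (by omega) (by omega))
    generalize q * q = m at hm ⊢
    omega
  · have hlt : q' < p' := lt_of_le_of_ne hpq' (fun e => h e.symm)
    simp only [if_neg h]
    have hk : (p' - q') / 4 * 4 ≤ p' - q' := Nat.div_mul_le_self _ _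
    set k := (p' - q') / 4 with hkdef
    have hgoal : p' * q' + p' - 1 + k < 2 * (p * q + p - 1) := by
      have hp1 : 1 ≤ p' := by omega
      have hpp : 1 ≤ p * q + p := by nlinarith
      have hpp' : 1 ≤ p' * q' + p' := by nlinarith
      zify [hpp, hpp', le_of_lt hlt] at hk ⊢
      have hq' : (0:ℤ) ≤ q' := by positivity
      have hd : (0:ℤ) ≤ (q:ℤ) - q' := by omega
      have hpq3 : (0:ℤ) ≤ (p:ℤ) - q := by omega
      have hs : (p':ℤ) + q' = p + q := by exact_mod_cast hsum
      have hq1 : (1:ℤ) ≤ q := by exact_mod_cast hq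
      nlinarith [mul_nonneg hd hpq3, sq_nonneg ((q:ℤ) - q' - 1), mul_pos (show (0:ℤ) < p by linarith) (show (0:ℤ) < q by linarith)]
    omega
end

section
/- For integers p₁ ≥ q₁ ≥ 0, q₂ ≥ p₂ ≥ 0 with p₁ + q₁ ≥ 2 and p₂ + q₂ ≥ 2, setting p = p₁q₂ + p₂q₁ and q = p₁p₂ + q₁q₂, we have 2(p₁q₁ + p₁ - 1) + (if p₁=q₁ then 1 else 0) + 2(p₂q₂ + q₂ - 1) + (if p₂=q₂ then 1 else 0) < 2(pq + p - 1) + (if p=q then 1 else 0). (Tensor-product subgroup SU(p₁,q₁)⊗SU(p₂,q₂) has smaller length than the length lower bound of SU(p,q).) -/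
lemma su_core (a b c d : ℕ) (h1 : b ≤ a) (h2 : c ≤ d)
    (hs1 : 2 ≤ a + b) (hs2 : 2 ≤ c + d) :
    a * b + a + (c * d + d) ≤ (a * d + c * b) * (a * c + b * d) + (a * d + c * b) := by
  rcases Nat.eq_zero_or_pos b with hb | hb <;> rcases Nat.eq_zero_or_pos c with hc | hc
  · subst hb hc
    have ha : 2 ≤ a := by omega
    have hd : 2 ≤ d := by omega
    zify at *
    nlinarith [mul_nonneg (by linarith : (0:ℤ) ≤ a - 2) (by linarith : (0:ℤ) ≤ d - 1)]
  · subst hb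
    have ha : 2 ≤ a := by omega
    zify at *
    nlinarith [mul_le_mul_of_nonneg_right (by nlinarith : (4:ℤ) ≤ (a:ℤ)*a) (by positivity : (0:ℤ) ≤ (c:ℤ)*d),
      mul_nonneg (by linarith : (0:ℤ) ≤ (a:ℤ) - 1) (by linarith : (0:ℤ) ≤ (d:ℤ) - 1),
      mul_pos (by linarith : (0:ℤ) < (c:ℤ)) (by linarith : (0:ℤ) < (d:ℤ))]
  · subst hc
    have hd : 2 ≤ d := by omega
    zify at *
    nlinarith [mul_le_mul_of_nonneg_right (by nlinarith : (4:ℤ) ≤ (d:ℤ)*d) (by positivity : (0:ℤ) ≤ (a:ℤ)*b),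
      mul_nonneg (by linarith : (0:ℤ) ≤ (a:ℤ) - 1) (by linarith : (0:ℤ) ≤ (d:ℤ) - 1),
      mul_pos (by linarith : (0:ℤ) < (a:ℤ)) (by linarith : (0:ℤ) < (b:ℤ))]
  · have ha : 1 ≤ a := by omega
    have hd : 1 ≤ d := by omega
    zify at *
    nlinarith [mul_nonneg (mul_nonneg (by linarith : (0:ℤ) ≤ (a:ℤ)) (by linarith : (0:ℤ) ≤ (b:ℤ)))
        (by nlinarith : (0:ℤ) ≤ (c:ℤ)*c + d*d - 2),
      mul_nonneg (mul_nonneg (by linarith : (0:ℤ) ≤ (c:ℤ)) (by linarith : (0:ℤ) ≤ (d:ℤ)))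
        (by nlinarith : (0:ℤ) ≤ (a:ℤ)*a + b*b - 2),
      mul_le_mul (by exact_mod_cast h1 : (b:ℤ) ≤ a) (by linarith : (1:ℤ) ≤ b) (by linarith) (by linarith),
      mul_le_mul (by exact_mod_cast h2 : (c:ℤ) ≤ d) (by linarith : (1:ℤ) ≤ c) (by linarith) (by linarith)]

theorem su_tensor_length (p₁ q₁ p₂ q₂ : ℕ) (h1 : q₁ ≤ p₁) (h2 : p₂ ≤ q₂)
    (hs1 : 2 ≤ p₁ + q₁) (hs2 : 2 ≤ p₂ + q₂) :
    2 * (p₁ * q₁ + p₁ - 1) + (if p₁ = q₁ then 1 else 0)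
      + (2 * (p₂ * q₂ + q₂ - 1) + (if p₂ = q₂ then 1 else 0))
      < 2 * ((p₁ * q₂ + p₂ * q₁) * (p₁ * p₂ + q₁ * q₂) + (p₁ * q₂ + p₂ * q₁) - 1)
        + (if p₁ * q₂ + p₂ * q₁ = p₁ * p₂ + q₁ * q₂ then 1 else 0) := by
  have hf := su_core p₁ q₁ p₂ q₂ h1 h2 hs1 hs2
  have ha : 1 ≤ p₁ := by omega
  have hd : 1 ≤ q₂ := by omega
  have h1' : 1 ≤ p₁ * q₁ + p₁ := by nlinarith
  have h2' : 1 ≤ p₂ * q₂ + q₂ := by nlinarith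
  have h3' : 1 ≤ (p₁ * q₂ + p₂ * q₁) * (p₁ * p₂ + q₁ * q₂) + (p₁ * q₂ + p₂ * q₁) := by omega
  split_ifs with e1 e2 e3 e2 e3 e3 e3 <;> try omega
  · exact absurd (by subst e1 e2; ring) e3
end

section
/- Let P be an n×n matrix that is antidiagonal with entries p_{i,n-i+1} determined (up to scalar) by i·p_{i,n-i+1} + (n-i)·p_{i+1,n-i} = 0. Then P is symmetric if n is odd and skew-symmetric if n is even. -/
open Matrix

/-- the antidiagonal matrix `P` with entries determined by
`i·p_{i,n-i+1} + (n-i)·p_{i+1,n-i} = 0` is symmetric if `n` is odd and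
skew-symmetric if `n` is even. Indices are 0-based and `i.rev` is the
antidiagonal partner of `i`. -/
theorem antidiagonal_form_symmetry (n : ℕ) (hn : 0 < n)
    (P : Matrix (Fin n) (Fin n) ℂ)
    (hP0 : ∀ i j : Fin n, j ≠ i.rev → P i j = 0)
    (hP1 : P (⟨0, hn⟩ : Fin n) (Fin.rev ⟨0, hn⟩) = 1)
    (hPrec : ∀ i : Fin n, ∀ hi : (i : ℕ) + 1 < n,
      ((i : ℕ) + 1 : ℂ) * P i i.rev
        + ((n : ℂ) - ((i : ℕ) + 1)) * P ⟨(i : ℕ) + 1, hi⟩ (Fin.rev ⟨(i : ℕ) + 1, hi⟩) = 0) :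
    (Odd n → Pᵀ = P) ∧ (Even n → Pᵀ = -P) := by
  have key : ∀ k (hk : k < n),
      (((n-1).choose k : ℕ) : ℂ) * P ⟨k, hk⟩ (Fin.rev ⟨k, hk⟩) = (-1)^k := by
    intro k
    induction k with
    | zero => intro hk; simpa using hP1
    | succ k ih =>
      intro hk
      have hk' : k < n := Nat.lt_of_succ_lt hk
      have h1 := ih hk'
      have h2 := hPrec ⟨k, hk'⟩ hk
      simp only [Fin.val_mk] at h2
      have hid : ((n-1).choose (k+1) * (k+1) : ℕ) = (n-1).choose k * (n-1-k) :=
        Nat.choose_succ_right_eq _ _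
      have hsub : ((n - 1 - k : ℕ) : ℂ) = (n : ℂ) - ((k:ℂ)+1) := by
        have h : n - 1 - k = n - (k+1) := by omega
        rw [h, Nat.cast_sub (by omega : k+1 ≤ n)]
        push_cast
        ring
      have hC : (((n-1).choose (k+1) : ℕ) : ℂ) * ((k:ℂ)+1)
          = (((n-1).choose k : ℕ) : ℂ) * ((n:ℂ) - ((k:ℂ)+1)) := by
        rw [← hsub]
        exact_mod_cast congrArg (Nat.cast (R := ℂ)) hid
      have hne : ((n:ℂ) - ((k:ℂ)+1)) ≠ 0 := by
        rw [← hsub]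
        exact_mod_cast Nat.cast_ne_zero.mpr (by omega : n - 1 - k ≠ 0)
      apply mul_left_cancel₀ hne
      linear_combination (((n-1).choose (k+1) : ℕ) : ℂ) * h2
        - P ⟨k, hk'⟩ (Fin.rev ⟨k, hk'⟩) * hC
        - ((n:ℂ) - ((k:ℂ)+1)) * h1
  have hsymm : ∀ i : Fin n, P i.rev i = (-1:ℂ)^(n-1) * P i i.rev := by
    intro i
    have h1 := key i i.isLt
    simp only [Fin.eta] at h1
    have hlt : n - 1 - (i:ℕ) < n := by omega
    have hrev : (⟨n - 1 - (i:ℕ), hlt⟩ : Fin n) = i.rev := by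
      ext
      simp only [Fin.val_rev]
      omega
    have h2 := key (n - 1 - (i:ℕ)) hlt
    rw [hrev, Fin.rev_rev, Nat.choose_symm (by omega : (i:ℕ) ≤ n-1)] at h2
    have hpow : ((-1:ℂ))^(n-1) = (-1)^(n-1-(i:ℕ)) * (-1)^(i:ℕ) := by
      rw [← pow_add]
      congr 1
      omega
    have hpow2 : ((-1:ℂ))^(n-1-(i:ℕ)) = (-1)^(n-1) * (-1)^(i:ℕ) := by
      rw [hpow, mul_assoc, ← pow_add, Even.neg_one_pow ⟨(i:ℕ), rfl⟩, mul_one]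
    have hCne : (((n-1).choose (i:ℕ) : ℕ) : ℂ) ≠ 0 :=
      Nat.cast_ne_zero.mpr (Nat.choose_pos (by omega : (i:ℕ) ≤ n-1)).ne'
    apply mul_left_cancel₀ hCne
    calc (((n-1).choose (i:ℕ) : ℕ) : ℂ) * P i.rev i = (-1)^(n-1-(i:ℕ)) := h2
      _ = (-1)^(n-1) * (-1)^(i:ℕ) := hpow2
      _ = (-1)^(n-1) * ((((n-1).choose (i:ℕ) : ℕ) : ℂ) * P i i.rev) := by rw [h1]
      _ = (((n-1).choose (i:ℕ) : ℕ) : ℂ) * ((-1:ℂ)^(n-1) * P i i.rev) := by ring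
  constructor
  · intro hodd
    have he : Even (n-1) := Nat.Odd.sub_odd hodd odd_one
    ext i j
    show P j i = P i j
    by_cases hj : j = i.rev
    · subst hj
      rw [hsymm i, he.neg_one_pow, one_mul]
    · have hi : i ≠ j.rev := by
        intro h
        exact hj (by rw [h, Fin.rev_rev])
      rw [hP0 j i hi, hP0 i j hj]
  · intro heven
    have ho : Odd (n-1) := Nat.Even.sub_odd hn heven odd_one
    ext i j
    show P j i = -P i j
    by_cases hj : j = i.rev
    · subst hj
      rw [hsymm i, ho.neg_one_pow, neg_one_mul]
    · have hi : i ≠ j.rev := by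
        intro h
        exact hj (by rw [h, Fin.rev_rev])
      rw [hP0 j i hi, hP0 i j hj, neg_zero]
end

section
/- Let p, q, p₁, q₁, p₂, q₂ be natural numbers with p₁ ≥ q₁, q₂ ≥ p₂ ≥ 0, q₂ ≥ 2, p = p₁q₂ + p₂q₁ and q = p₁p₂ + q₁q₂, and assume p ≥ q ≥ 1. Then 4p₁q₁ + 3p₁ - 1 + (if p₁=q₁ then 1 else 0) + p₂q₂ + q₂ - 1 + (if p₂=q₂ then 1 else 0) + ⌊(q₂-p₂)/4⌋ < 4pq + 3p - 1 + (if p=q then 1 else 0). (Length of Sp(p₁,q₁)⊗SO(p₂,q₂) is less than the length lower bound of Sp(p,q).) -/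
theorem sp_so_tensor_length (p q p₁ q₁ p₂ q₂ : ℕ) (h1 : q₁ ≤ p₁) (h2 : p₂ ≤ q₂)
    (hq2 : 2 ≤ q₂) (hs1 : 1 ≤ p₁ + q₁)
    (hp : p = p₁ * q₂ + p₂ * q₁) (hq : q = p₁ * p₂ + q₁ * q₂)
    (hpq : q ≤ p) (hq1 : 1 ≤ q) :
    4 * p₁ * q₁ + 3 * p₁ - 1 + (if p₁ = q₁ then 1 else 0)
      + (p₂ * q₂ + q₂ - 1 + (if p₂ = q₂ then 1 else 0)) + (q₂ - p₂) / 4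
      < 4 * p * q + 3 * p - 1 + (if p = q then 1 else 0) := by
  have hp1 : 1 ≤ p₁ := by omega
  have hq1' : 1 ≤ p₁ * p₂ + q₁ * q₂ := by rw [hq] at hq1; exact hq1
  have key : 4 * (p₁ * q₁) + 3 * p₁ + p₂ * q₂ + 2 * q₂ + 1 ≤ 4 * (p * q) + 3 * p := by
    subst hp hq
    zify at hq1' h1 h2 hq2 hp1 ⊢
    rcases Nat.eq_zero_or_pos q₁ with h0 | h0
    · subst h0
      have hp2 : (1:ℤ) ≤ p₂ := by nlinarith
      push_cast
      nlinarith [mul_nonneg (by linarith : (0:ℤ) ≤ (p₁:ℤ) - 1) (by linarith : (0:ℤ) ≤ (q₂:ℤ) - 2),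
        mul_nonneg (by nlinarith : (0:ℤ) ≤ (p₁:ℤ) * p₁ - 1) (by positivity : (0:ℤ) ≤ (p₂:ℤ) * q₂)]
    · have hq1z : (1:ℤ) ≤ q₁ := by exact_mod_cast h0
      nlinarith [mul_nonneg (by nlinarith : (0:ℤ) ≤ (q₂:ℤ) * q₂ - 4) (by positivity : (0:ℤ) ≤ (p₁:ℤ) * q₁),
        mul_nonneg (by nlinarith : (0:ℤ) ≤ (p₁:ℤ) * p₁ - 1) (by positivity : (0:ℤ) ≤ (p₂:ℤ) * q₂),
        mul_nonneg (by linarith : (0:ℤ) ≤ (p₁:ℤ) - 1) (by linarith : (0:ℤ) ≤ (q₂:ℤ) - 1),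
        mul_nonneg (mul_nonneg (by positivity : (0:ℤ) ≤ (p₁:ℤ) * p₂) (by positivity : (0:ℤ) ≤ (p₂:ℤ))) (by positivity : (0:ℤ) ≤ (q₁:ℤ)),
        mul_nonneg (mul_nonneg (by positivity : (0:ℤ) ≤ (p₂:ℤ) * q₁) (by positivity : (0:ℤ) ≤ (q₁:ℤ))) (by positivity : (0:ℤ) ≤ (q₂:ℤ)),
        mul_le_mul hp1 hq1z (by norm_num) (by positivity : (0:ℤ) ≤ (p₁:ℤ))]
  have hA : 4 * p₁ * q₁ = 4 * (p₁ * q₁) := by ring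
  have hB : 4 * p * q = 4 * (p * q) := by ring
  rw [hA, hB]
  generalize p₁ * q₁ = A at key ⊢
  generalize p₂ * q₂ = B at key ⊢
  generalize p * q = C at key ⊢
  have hp2 : 2 ≤ p := by subst hp; nlinarith
  split_ifs <;> omega
end

section
/- Let p ≥ q > 0 and let k be a positive integer with p + q = 2k and ⌊k/2⌋ ≤ q. Then p ≤ ⌈3k/2⌉ and k² + ⌊k/2⌋ < 2(pq + p - 1). (Length of SO*(2k) is less than the length lower bound of SU(p,q) when its real rank fits.) -/
theorem sostar_length_lt_su_bound (p q k : ℕ) (hq : 0 < q) (hpq : q ≤ p)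
    (hk : 0 < k) (hsum : p + q = 2 * k) (hrank : k / 2 ≤ q) :
    p ≤ (3 * k + 1) / 2 ∧ k ^ 2 + k / 2 < 2 * (p * q + p - 1) := by
  refine ⟨by omega, ?_⟩
  have hqk : q ≤ k := by omega
  have h1 : 1 ≤ p * q + p := by nlinarith
  have ha1 : 2 * (k / 2) ≤ k := by omega
  have ha2 : k ≤ 2 * (k / 2) + 1 := by omega
  zify [h1] at *
  nlinarith [mul_nonneg (sub_nonneg.2 hrank) (sub_nonneg.2 hqk), sq_nonneg ((k:ℤ) - q)]
end
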